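/- arXiv:2204.00063 — 4 statements merged into one kernel-verified Lean document; each statement's English description precedes it below -/
import Mathlib

section
/- On the hyperbolic half-plane H² = {(x,y) ∈ ℝ² : y > 0} with metric g = (dx² + dy²)/y², the functions f₁(x,y) = -(λ - c₂) ln y and f₂(x,y) = -(√(c₁(λ - c₂))/c₁) ln y satisfy the gradient generalised Ricci soliton equation Hess f₁ = -c₁ df₂ ⊙ df₂ + c₂ Ric + λ g, provided c₁(λ - c₂) > 0. -/
noncomputable section
open scoped BigOperators

/-- Partial derivative of `f` in direction `i` at `x`. -/
def pd {n : ℕ} (i : Fin n) (f : (Fin n → ℝ) → ℝ) (x : Fin n → ℝ) : ℝ :=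
  fderiv ℝ f x (Pi.single i 1)

/-- Christoffel symbols `Γ^k_{ij}` of the metric `g` (given as a matrix field). -/
def christoffel {n : ℕ} (g : (Fin n → ℝ) → Matrix (Fin n) (Fin n) ℝ)
    (k i j : Fin n) (x : Fin n → ℝ) : ℝ :=
  (1 / 2) * ∑ l, (g x)⁻¹ k l *
    (pd i (fun y => g y j l) x + pd j (fun y => g y i l) x - pd l (fun y => g y i j) x)

/-- Components of the Riemannian Hessian of `f`. -/
def hessian {n : ℕ} (g : (Fin n → ℝ) → Matrix (Fin n) (Fin n) ℝ)
    (f : (Fin n → ℝ) → ℝ) (i j : Fin n) (x : Fin n → ℝ) : ℝ :=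
  pd i (pd j f) x - ∑ k, christoffel g k i j x * pd k f x

/-- Components `R^l_{ijk}` of the Riemann curvature tensor. -/
def riemCurv {n : ℕ} (g : (Fin n → ℝ) → Matrix (Fin n) (Fin n) ℝ)
    (l i j k : Fin n) (x : Fin n → ℝ) : ℝ :=
  pd i (christoffel g l j k) x - pd j (christoffel g l i k) x
    + ∑ m, christoffel g l i m x * christoffel g m j k x
    - ∑ m, christoffel g l j m x * christoffel g m i k x

/-- Components of the Ricci tensor. -/
def ricciT {n : ℕ} (g : (Fin n → ℝ) → Matrix (Fin n) (Fin n) ℝ)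
    (j k : Fin n) (x : Fin n → ℝ) : ℝ :=
  ∑ i, riemCurv g i i j k x

/-! In the upper half-space model `g = x_k⁻² δ` the Christoffel symbols are
`Γᵃᵢⱼ = (δₐₖ δᵢⱼ - δᵢₖ δⱼₐ - δⱼₖ δᵢₐ) / x_k`, whence `Ric = -(n - 1) g` and, for
`f = c log x_k`, `Hess f = c (dx_k ⊗ dx_k / x_k² - g)`. For `n = 2` and `c = -(λ - c₂)` this is
`(λ - c₂) g - (λ - c₂) dy² / y²`, where `(λ - c₂) g = c₂ Ric + λ g` and
`-(λ - c₂) dy² / y² = -c₁ df₂ ⊙ df₂`. -/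

open Filter Topology

variable {n : ℕ}

lemma pd_of_eventuallyEq_comp {f : (Fin n → ℝ) → ℝ} {h : ℝ → ℝ} {h' : ℝ} {k : Fin n}
    {x : Fin n → ℝ} (hf : f =ᶠ[𝓝 x] fun y => h (y k)) (hh : HasDerivAt h h' (x k))
    (i : Fin n) : pd i f x = if i = k then h' else 0 := by
  have hfd : HasFDerivAt (fun y => h (y k)) (h' • ContinuousLinearMap.proj k) x :=
    hh.comp_hasFDerivAt x
      (ContinuousLinearMap.proj (R := ℝ) (φ := fun _ : Fin n => ℝ) k).hasFDerivAt
  rw [pd, hf.fderiv_eq, hfd.fderiv]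
  simp [Pi.single_apply, eq_comm]

lemma eventually_ne_coord {k : Fin n} {x : Fin n → ℝ} (hx : x k ≠ 0) :
    ∀ᶠ y in 𝓝 x, y k ≠ 0 :=
  (continuous_apply k).continuousAt.eventually_ne hx

lemma pd_mul_log {k : Fin n} {x : Fin n → ℝ} (hx : x k ≠ 0) (c : ℝ) (i : Fin n) :
    pd i (fun y => c * Real.log (y k)) x = if i = k then c / x k else 0 := by
  rw [pd_of_eventuallyEq_comp (h := fun t => c * Real.log t) EventuallyEq.rfl
    ((Real.hasDerivAt_log hx).const_mul c), div_eq_mul_inv]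

def hyperbolicMetric (k : Fin n) (x : Fin n → ℝ) : Matrix (Fin n) (Fin n) ℝ :=
  ((x k) ^ 2)⁻¹ • 1

lemma hyperbolicMetric_inv {k : Fin n} {x : Fin n → ℝ} (hx : x k ≠ 0) :
    (hyperbolicMetric k x)⁻¹ = (x k ^ 2) • 1 := by
  apply Matrix.inv_eq_right_inv
  rw [hyperbolicMetric, Matrix.smul_mul, Matrix.mul_smul, Matrix.one_mul, smul_smul,
    inv_mul_cancel₀ (by positivity), one_smul]

lemma pd_hyperbolicMetric {k : Fin n} {x : Fin n → ℝ} (hx : x k ≠ 0) (i j l : Fin n) :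
    pd i (fun y => hyperbolicMetric k y j l) x =
      if i = k ∧ j = l then -2 / x k ^ 3 else 0 := by
  have hd : HasDerivAt (fun t : ℝ => (t ^ 2)⁻¹ * if j = l then 1 else 0)
      (-2 / x k ^ 3 * if j = l then 1 else 0) (x k) := by
    refine (((hasDerivAt_pow 2 (x k)).inv (pow_ne_zero 2 hx)).mul_const _).congr_deriv ?_
    field_simp
    ring
  rw [pd_of_eventuallyEq_comp (Eventually.of_forall fun y => ?_) hd]
  · split_ifs <;> simp_all
  · simp [hyperbolicMetric, Matrix.one_apply]

def hyperbolicChristoffelCoeff (k a i j : Fin n) : ℝ :=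
  (if a = k ∧ i = j then 1 else 0) - (if i = k ∧ j = a then 1 else 0)
    - (if j = k ∧ i = a then 1 else 0)

lemma christoffel_hyperbolicMetric {k : Fin n} {x : Fin n → ℝ} (hx : x k ≠ 0)
    (a i j : Fin n) :
    christoffel (hyperbolicMetric k) a i j x = hyperbolicChristoffelCoeff k a i j / x k := by
  simp only [christoffel, hyperbolicMetric_inv hx, pd_hyperbolicMetric hx, Matrix.smul_apply,
    Matrix.one_apply, smul_eq_mul, mul_ite, mul_one, mul_zero, ite_mul, zero_mul,
    Finset.sum_ite_eq, Finset.mem_univ, if_true, hyperbolicChristoffelCoeff]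
  split_ifs <;> field_simp <;> ring

lemma sum_hyperbolicChristoffelCoeff_self (k m : Fin n) :
    ∑ i, hyperbolicChristoffelCoeff k i i m = if m = k then -(n : ℝ) else 0 := by
  simp only [hyperbolicChristoffelCoeff, ite_and, and_true, Finset.sum_sub_distrib,
    Finset.sum_ite_eq', Finset.mem_univ, if_true, Finset.sum_ite_irrel, Finset.sum_const,
    Finset.card_univ, Fintype.card_fin, nsmul_eq_mul, mul_one]
  split_ifs <;> simp_all

lemma sum_sum_hyperbolicChristoffelCoeff_mul (k j l : Fin n) :
    ∑ i, ∑ m, hyperbolicChristoffelCoeff k i j m * hyperbolicChristoffelCoeff k m i l =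
      (if j = k ∧ l = k then (n : ℝ) + 2 else 0) - if j = l then 2 else 0 := by
  simp only [hyperbolicChristoffelCoeff, ite_and, mul_sub, mul_ite, mul_one, mul_zero,
    Finset.sum_sub_distrib, Finset.sum_ite_eq', Finset.mem_univ, if_true, Finset.sum_ite_irrel,
    Finset.sum_ite_eq, Finset.sum_const_zero, sub_sub_cancel_left, Finset.sum_neg_distrib,
    Finset.sum_const, Finset.card_univ, Fintype.card_fin, nsmul_eq_mul]
  split_ifs <;> simp_all
  ring

lemma pd_christoffel_hyperbolicMetric {k : Fin n} {x : Fin n → ℝ} (hx : x k ≠ 0)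
    (m a i j : Fin n) :
    pd m (christoffel (hyperbolicMetric k) a i j) x =
      if m = k then -hyperbolicChristoffelCoeff k a i j / x k ^ 2 else 0 := by
  refine pd_of_eventuallyEq_comp (h := fun t => hyperbolicChristoffelCoeff k a i j * t⁻¹) ?_
    (((hasDerivAt_inv hx).const_mul _).congr_deriv (by ring)) m
  filter_upwards [eventually_ne_coord hx] with y hy
  rw [christoffel_hyperbolicMetric hy, div_eq_mul_inv]

lemma ricciT_hyperbolicMetric {k : Fin n} {x : Fin n → ℝ} (hx : x k ≠ 0) (j l : Fin n) :
    ricciT (hyperbolicMetric k) j l x = -((n : ℝ) - 1) * hyperbolicMetric k x j l := by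
  have htrace :
      ∑ i, ∑ m, hyperbolicChristoffelCoeff k i i m * hyperbolicChristoffelCoeff k m j l =
        -n * hyperbolicChristoffelCoeff k k j l := by
    simp [Finset.sum_comm (γ := Fin n), ← Finset.sum_mul, sum_hyperbolicChristoffelCoeff_self]
  simp only [ricciT, riemCurv, pd_christoffel_hyperbolicMetric hx, christoffel_hyperbolicMetric hx,
    div_mul_div_comm, ← Finset.sum_div, Finset.sum_ite_eq', Finset.mem_univ, if_true,
    Finset.sum_add_distrib, Finset.sum_sub_distrib, Finset.sum_ite_irrel, Finset.sum_const_zero,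
    neg_div, Finset.sum_neg_distrib, htrace, sum_hyperbolicChristoffelCoeff_self,
    sum_sum_hyperbolicChristoffelCoeff_mul]
  simp only [hyperbolicChristoffelCoeff, hyperbolicMetric, Matrix.smul_apply, Matrix.one_apply,
    smul_eq_mul]
  split_ifs <;> simp_all <;> field_simp <;> ring

lemma hessian_hyperbolicMetric_mul_log {k : Fin n} {x : Fin n → ℝ} (hx : x k ≠ 0) (c : ℝ)
    (i j : Fin n) :
    hessian (hyperbolicMetric k) (fun y => c * Real.log (y k)) i j x =
      c * ((if i = k ∧ j = k then 1 else 0) - if i = j then 1 else 0) / x k ^ 2 := by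
  have hpd : pd j (fun y => c * Real.log (y k)) =ᶠ[𝓝 x]
      fun y => (if j = k then c else 0) * (y k)⁻¹ := by
    filter_upwards [eventually_ne_coord hx] with y hy
    rw [pd_mul_log hy]
    split_ifs <;> simp [div_eq_mul_inv]
  rw [hessian, pd_of_eventuallyEq_comp hpd (hasDerivAt_inv hx |>.const_mul _)]
  simp only [christoffel_hyperbolicMetric hx, pd_mul_log hx, mul_ite, mul_zero,
    Finset.sum_ite_eq', Finset.mem_univ, if_true, hyperbolicChristoffelCoeff]
  split_ifs <;> simp_all <;> ring

/-- On the hyperbolic half-plane `H² = {(x,y) : y > 0}` with metric `g = (dx²+dy²)/y²`,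
the functions `f₁ = -(λ-c₂) log y` and `f₂ = -(√(c₁(λ-c₂))/c₁) log y` satisfy the
gradient generalised Ricci soliton equation `Hess f₁ = -c₁ df₂ ⊙ df₂ + c₂ Ric + λ g`,
provided `c₁(λ-c₂) > 0`. -/
theorem hyperbolic_generalised_ricci_soliton (c₁ c₂ lam : ℝ) (hc : c₁ * (lam - c₂) > 0)
    (g : (Fin 2 → ℝ) → Matrix (Fin 2) (Fin 2) ℝ)
    (hg : ∀ x, g x = ((x 1) ^ 2)⁻¹ • (1 : Matrix (Fin 2) (Fin 2) ℝ))
    (f₁ f₂ : (Fin 2 → ℝ) → ℝ)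
    (hf₁ : ∀ x, f₁ x = -(lam - c₂) * Real.log (x 1))
    (hf₂ : ∀ x, f₂ x = -(Real.sqrt (c₁ * (lam - c₂)) / c₁) * Real.log (x 1)) :
    ∀ x : Fin 2 → ℝ, 0 < x 1 → ∀ i j : Fin 2,
      hessian g f₁ i j x =
        -c₁ * (pd i f₂ x * pd j f₂ x) + c₂ * ricciT g i j x + lam * g x i j := by
  obtain rfl : g = hyperbolicMetric 1 := funext hg
  obtain rfl : f₁ = fun y => -(lam - c₂) * Real.log (y 1) := funext hf₁
  obtain rfl : f₂ = fun y => -(Real.sqrt (c₁ * (lam - c₂)) / c₁) * Real.log (y 1) :=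
    funext hf₂
  intro x hx i j
  have hc₁ : c₁ ≠ 0 := left_ne_zero_of_mul hc.ne'
  have hsqrt := Real.mul_self_sqrt hc.le
  rw [hessian_hyperbolicMetric_mul_log hx.ne', ricciT_hyperbolicMetric hx.ne', pd_mul_log hx.ne',
    pd_mul_log hx.ne']
  simp only [hyperbolicMetric, Matrix.smul_apply, Matrix.one_apply, smul_eq_mul]
  split_ifs <;> simp_all <;> field_simp <;> linarith
end
end

section
/- Let (M, φ, ξ, η, g) be a Sasakian manifold and X₁ a vector field. For any vector field Y orthogonal to ξ, (L_ξ(L_{X₁} g))(Y, ξ) = g(X₁, Y) + g(∇_ξ ∇_ξ X₁, Y) + Y(g(∇_ξ X₁, ξ)). -/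
noncomputable section

/-- Abstract data of a Riemannian manifold: `C` plays the role of the ring of smooth
functions, `V` the module of smooth vector fields, `g` the metric, `D` the directional
derivative, `nabla` the Levi-Civita connection, `bracket` the Lie bracket and
`grad` the gradient. -/
structure RiemannianStructure (C V : Type) [CommRing C] [Algebra ℝ C]
    [AddCommGroup V] [Module C V] where
  g : V →ₗ[C] V →ₗ[C] C
  g_symm : ∀ X Y : V, g X Y = g Y X
  D : V → C → C
  D_smul_left : ∀ (f : C) (X : V) (h : C), D (f • X) h = f * D X h
  D_add_left : ∀ (X Y : V) (h : C), D (X + Y) h = D X h + D Y h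
  D_add_right : ∀ (X : V) (f h : C), D X (f + h) = D X f + D X h
  D_mul : ∀ (X : V) (f h : C), D X (f * h) = D X f * h + f * D X h
  D_const : ∀ (X : V) (r : ℝ), D X (algebraMap ℝ C r) = 0
  nabla : V → V → V
  nabla_add_left : ∀ X Y Z : V, nabla (X + Y) Z = nabla X Z + nabla Y Z
  nabla_smul_left : ∀ (f : C) (X Y : V), nabla (f • X) Y = f • nabla X Y
  nabla_add_right : ∀ X Y Z : V, nabla X (Y + Z) = nabla X Y + nabla X Z
  nabla_leibniz : ∀ (X : V) (f : C) (Y : V), nabla X (f • Y) = D X f • Y + f • nabla X Y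
  compat : ∀ X Y Z : V, D X (g Y Z) = g (nabla X Y) Z + g Y (nabla X Z)
  bracket : V → V → V
  torsion_free : ∀ X Y : V, nabla X Y - nabla Y X = bracket X Y
  bracket_apply : ∀ (X Y : V) (f : C), D (bracket X Y) f = D X (D Y f) - D Y (D X f)
  grad : C → V
  grad_def : ∀ (f : C) (X : V), g (grad f) X = D X f

namespace RiemannianStructure

variable {C V : Type} [CommRing C] [Algebra ℝ C] [AddCommGroup V] [Module C V]
variable (S : RiemannianStructure C V)

/-- The Hessian of a function: `Hess f (X, Y) = g(∇_X grad f, Y)`. -/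
def hess (f : C) (X Y : V) : C := S.g (S.nabla X (S.grad f)) Y

/-- The Riemann curvature tensor. -/
def R (X Y Z : V) : V :=
  S.nabla X (S.nabla Y Z) - S.nabla Y (S.nabla X Z) - S.nabla (S.bracket X Y) Z

/-- The Lie derivative of the metric: `(L_X g)(Y, Z) = g(∇_Y X, Z) + g(∇_Z X, Y)`. -/
def lieMetric (X Y Z : V) : C := S.g (S.nabla Y X) Z + S.g (S.nabla Z X) Y

/-- The Lie derivative of a 2-tensor `T` along `ξ`. -/
def lieTensor (ξ : V) (T : V → V → C) (Y Z : V) : C :=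
  S.D ξ (T Y Z) - T (S.bracket ξ Y) Z - T Y (S.bracket ξ Z)

/-- The symmetric square `df ⊙ df` of the differential of `f`:
`(df ⊙ df)(X, Y) = X(f) Y(f)`. -/
def diffSq (f : C) (X Y : V) : C := S.D X f * S.D Y f

/-- `e` is an orthonormal frame: orthonormality plus the expansion of every vector
field in the frame. -/
def IsOrthonormalFrame {k : ℕ} (e : Fin k → V) : Prop :=
  (∀ i j, S.g (e i) (e j) = if i = j then 1 else 0) ∧
    ∀ X : V, X = ∑ i, S.g X (e i) • e i

/-- The Ricci tensor computed in the frame `e`: `Ric(X, Y) = Σᵢ g(R(X, eᵢ)eᵢ, Y)`. -/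
def ricciOf {k : ℕ} (e : Fin k → V) (X Y : V) : C := ∑ i, S.g (S.R X (e i) (e i)) Y

end RiemannianStructure

/-- An almost contact metric structure on an abstract Riemannian manifold `S`. -/
structure AlmostContactMetricOn {C V : Type} [CommRing C] [Algebra ℝ C]
    [AddCommGroup V] [Module C V] (S : RiemannianStructure C V) where
  φ : V →ₗ[C] V
  ξ : V
  η : V →ₗ[C] C
  η_xi : η ξ = 1
  φ_sq : ∀ X : V, φ (φ X) = -X + η X • ξ
  g_φ : ∀ X Y : V, S.g (φ X) (φ Y) = S.g X Y - η X * η Y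
  η_g : ∀ X : V, η X = S.g ξ X
  φ_xi : φ ξ = 0

/-- A Sasakian structure on an abstract Riemannian manifold `S`. -/
structure SasakianOn {C V : Type} [CommRing C] [Algebra ℝ C]
    [AddCommGroup V] [Module C V] (S : RiemannianStructure C V)
    extends AlmostContactMetricOn S where
  sasaki : ∀ X Y : V, S.nabla X (φ Y) - φ (S.nabla X Y) = S.g X Y • ξ - η Y • X
  nabla_xi : ∀ X : V, S.nabla X ξ = -(φ X)


variable {C V : Type} [CommRing C] [Algebra ℝ C] [AddCommGroup V] [Module C V]

namespace RiemannianStructure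

variable (S : RiemannianStructure C V)

lemma nabla_zero_right (X : V) : S.nabla X 0 = 0 := by
  have := S.nabla_leibniz X 0 0
  simpa using this

lemma nabla_zero_left (X : V) : S.nabla 0 X = 0 := by
  have := S.nabla_smul_left 0 X X
  simpa using this

lemma nabla_neg_right (X Z : V) : S.nabla X (-Z) = -S.nabla X Z := by
  have h : S.nabla X Z + S.nabla X (-Z) = 0 := by
    rw [← S.nabla_add_right, add_neg_cancel, S.nabla_zero_right]
  exact (neg_eq_of_add_eq_zero_right h).symm

lemma nabla_sub_right (X Z W : V) : S.nabla X (Z - W) = S.nabla X Z - S.nabla X W := by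
  rw [sub_eq_add_neg, S.nabla_add_right, S.nabla_neg_right, sub_eq_add_neg]

/-- Antisymmetry of the curvature tensor in the last two slots. -/
lemma R_antisym (X Y Z W : V) :
    S.g (S.R X Y Z) W = - S.g Z (S.R X Y W) := by
  have h1 : S.D X (S.D Y (S.g Z W)) =
      S.g (S.nabla X (S.nabla Y Z)) W + S.g (S.nabla Y Z) (S.nabla X W)
        + (S.g (S.nabla X Z) (S.nabla Y W) + S.g Z (S.nabla X (S.nabla Y W))) := by
    rw [S.compat Y Z W, S.D_add_right, S.compat, S.compat]
  have h2 : S.D Y (S.D X (S.g Z W)) =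
      S.g (S.nabla Y (S.nabla X Z)) W + S.g (S.nabla X Z) (S.nabla Y W)
        + (S.g (S.nabla Y Z) (S.nabla X W) + S.g Z (S.nabla Y (S.nabla X W))) := by
    rw [S.compat X Z W, S.D_add_right, S.compat, S.compat]
  have h3 : S.D (S.bracket X Y) (S.g Z W) =
      S.g (S.nabla (S.bracket X Y) Z) W + S.g Z (S.nabla (S.bracket X Y) W) :=
    S.compat _ _ _
  have h4 := S.bracket_apply X Y (S.g Z W)
  simp only [R, map_sub, LinearMap.sub_apply]
  linear_combination h2 - h1 + h3 - h4

end RiemannianStructure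

/-- In a Sasakian manifold, for a vector field `X₁` and any vector field `Y` orthogonal
to `ξ`: `(L_ξ (L_{X₁} g))(Y, ξ) = g(X₁, Y) + g(∇_ξ ∇_ξ X₁, Y) + Y(g(∇_ξ X₁, ξ))`. -/
theorem sasakian_lie_lie_metric (S : RiemannianStructure C V) (SS : SasakianOn S)
    (X₁ Y : V) (hY : S.g Y SS.ξ = 0) :
    S.lieTensor SS.ξ (S.lieMetric X₁) Y SS.ξ =
      S.g X₁ Y + S.g (S.nabla SS.ξ (S.nabla SS.ξ X₁)) Y
        + S.D Y (S.g (S.nabla SS.ξ X₁) SS.ξ) := by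
  set ξ := SS.ξ with hξ
  -- basic facts
  have hηY : SS.η Y = 0 := by rw [SS.η_g, S.g_symm]; exact hY
  have hnξξ : S.nabla ξ ξ = 0 := by rw [SS.nabla_xi, SS.φ_xi, neg_zero]
  have hbrξξ : S.bracket ξ ξ = 0 := by rw [← S.torsion_free, sub_self]
  have hbr : S.bracket ξ Y = S.nabla ξ Y + SS.φ Y := by
    rw [← S.torsion_free, SS.nabla_xi, sub_neg_eq_add]
  -- ∇_ξ (φ Y) = φ (∇_ξ Y)
  have hφ : S.nabla ξ (SS.φ Y) = SS.φ (S.nabla ξ Y) := by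
    have h := SS.sasaki ξ Y
    rw [SS.η_g, sub_self] at h
    exact sub_eq_zero.mp h
  -- R(ξ, Y)ξ = -Y
  have hR : S.R ξ Y ξ = -Y := by
    have h1 : S.nabla Y ξ = -(SS.φ Y) := SS.nabla_xi Y
    have h2 : S.nabla ξ (S.nabla Y ξ) = -(SS.φ (S.nabla ξ Y)) := by
      rw [h1, S.nabla_neg_right, hφ]
    have h3 : S.nabla (S.bracket ξ Y) ξ = -(SS.φ (S.nabla ξ Y) + SS.φ (SS.φ Y)) := by
      rw [SS.nabla_xi, hbr, map_add]
    have h4 : SS.φ (SS.φ Y) = -Y := by rw [SS.φ_sq, hηY, zero_smul, add_zero]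
    rw [RiemannianStructure.R, h2, hnξξ, S.nabla_zero_right, h3, h4]
    abel
  -- g(R(ξ,Y)X₁, ξ) = g(X₁, Y)
  have hRg : S.g (S.R ξ Y X₁) ξ = S.g X₁ Y := by
    rw [S.R_antisym, hR]; simp
  -- the three curvature terms
  have hRdef : S.g (S.R ξ Y X₁) ξ =
      S.g (S.nabla ξ (S.nabla Y X₁)) ξ - S.g (S.nabla Y (S.nabla ξ X₁)) ξ
        - S.g (S.nabla (S.bracket ξ Y) X₁) ξ := by
    rw [RiemannianStructure.R]; simp [map_sub]
  -- compatibility expansions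
  have c1 : S.D ξ (S.g (S.nabla Y X₁) ξ) =
      S.g (S.nabla ξ (S.nabla Y X₁)) ξ + S.g (S.nabla Y X₁) (S.nabla ξ ξ) := S.compat _ _ _
  have c2 : S.D ξ (S.g (S.nabla ξ X₁) Y) =
      S.g (S.nabla ξ (S.nabla ξ X₁)) Y + S.g (S.nabla ξ X₁) (S.nabla ξ Y) := S.compat _ _ _
  have c3 : S.D Y (S.g (S.nabla ξ X₁) ξ) =
      S.g (S.nabla Y (S.nabla ξ X₁)) ξ + S.g (S.nabla ξ X₁) (S.nabla Y ξ) := S.compat _ _ _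
  -- unfold everything
  rw [RiemannianStructure.lieTensor, hbrξξ]
  simp only [RiemannianStructure.lieMetric, S.nabla_zero_left, hbr, map_zero,
    LinearMap.zero_apply, map_add, LinearMap.add_apply, S.D_add_right, SS.nabla_xi Y]
  rw [hbr] at hRdef
  rw [SS.nabla_xi Y] at c3
  simp only [map_neg] at c3
  rw [c1, c2, c3]
  simp only [hnξξ, map_zero, map_neg, LinearMap.neg_apply]
  linear_combination hRg - hRdef
end
end

section
/- Let (M, φ, ξ, η, g) be a Sasakian manifold of dimension 2n+1 satisfying Hess f₁ = -c₁ df₂ ⊙ df₂ + c₂ Ric + λ g for smooth f₁, f₂ and constants c₁, c₂, λ. Then the vector field ζ = grad f₁ + c₁ ξ(ξ(f₂)) grad f₂ - c₁ ξ(f₂) ∇_ξ grad f₂ equals ξ(f₁)·ξ; in particular, ζ is parallel to ξ. -/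
noncomputable section

variable {C V : Type} [CommRing C] [Algebra ℝ C] [AddCommGroup V] [Module C V]

section Helpers

variable {C V : Type} [CommRing C] [Algebra ℝ C] [AddCommGroup V] [Module C V]
variable (S : RiemannianStructure C V)

lemma aux_D_zero_right (X : V) : S.D X 0 = 0 := by
  simpa using S.D_const X 0

lemma aux_D_neg_right (X : V) (f : C) : S.D X (-f) = -S.D X f := by
  have h := S.D_add_right X f (-f)
  rw [add_neg_cancel, aux_D_zero_right] at h
  linear_combination -h

lemma aux_D_neg_left (X : V) (f : C) : S.D (-X) f = -S.D X f := by
  have h := S.D_smul_left (-1 : C) X f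
  rw [neg_one_smul] at h
  linear_combination h

lemma aux_D_sub_left (X Y : V) (f : C) : S.D (X - Y) f = S.D X f - S.D Y f := by
  rw [sub_eq_add_neg, S.D_add_left, aux_D_neg_left]; ring

lemma aux_nabla_zero_right (X : V) : S.nabla X 0 = 0 := by
  have h := S.nabla_add_right X 0 0
  rw [add_zero] at h
  exact (left_eq_add.mp h)

lemma aux_nabla_neg_right (X Z : V) : S.nabla X (-Z) = -S.nabla X Z := by
  have h := S.nabla_add_right X Z (-Z)
  rw [add_neg_cancel, aux_nabla_zero_right, add_comm] at h
  exact eq_neg_of_add_eq_zero_left h.symm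

lemma aux_g_smul_left (f : C) (X Y : V) : S.g (f • X) Y = f * S.g X Y := by
  rw [map_smul, LinearMap.smul_apply, smul_eq_mul]

lemma aux_g_smul_right (f : C) (X Y : V) : S.g X (f • Y) = f * S.g X Y := by
  rw [map_smul, smul_eq_mul]

lemma aux_g_add_left (X Y Z : V) : S.g (X + Y) Z = S.g X Z + S.g Y Z := by
  rw [map_add, LinearMap.add_apply]

lemma aux_g_sub_left (X Y Z : V) : S.g (X - Y) Z = S.g X Z - S.g Y Z := by
  rw [map_sub, LinearMap.sub_apply]

lemma aux_g_neg_left (X Z : V) : S.g (-X) Z = -S.g X Z := by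
  rw [map_neg, LinearMap.neg_apply]

lemma aux_g_zero_right (X : V) : S.g X 0 = 0 := map_zero _

lemma aux_g_zero_left (X : V) : S.g 0 X = 0 := by
  rw [map_zero, LinearMap.zero_apply]

lemma aux_hess_eq (f : C) (X Y : V) :
    S.hess f X Y = S.D X (S.D Y f) - S.D (S.nabla X Y) f := by
  have h := S.compat X (S.grad f) Y
  rw [S.grad_def, S.grad_def] at h
  unfold RiemannianStructure.hess
  linear_combination -h

lemma aux_hess_symm (f : C) (X Y : V) : S.hess f X Y = S.hess f Y X := by
  rw [aux_hess_eq, aux_hess_eq]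
  have hb := S.bracket_apply X Y f
  rw [← S.torsion_free, aux_D_sub_left] at hb
  linear_combination -hb

lemma aux_gR_antisymm (X Y Z W : V) :
    S.g (S.R X Y Z) W + S.g Z (S.R X Y W) = 0 := by
  have hb := S.bracket_apply X Y (S.g Z W)
  have e1 : S.D X (S.D Y (S.g Z W)) =
      S.g (S.nabla X (S.nabla Y Z)) W + S.g (S.nabla Y Z) (S.nabla X W)
        + (S.g (S.nabla X Z) (S.nabla Y W) + S.g Z (S.nabla X (S.nabla Y W))) := by
    rw [S.compat Y Z W, S.D_add_right, S.compat X (S.nabla Y Z) W,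
      S.compat X Z (S.nabla Y W)]
  have e2 : S.D Y (S.D X (S.g Z W)) =
      S.g (S.nabla Y (S.nabla X Z)) W + S.g (S.nabla X Z) (S.nabla Y W)
        + (S.g (S.nabla Y Z) (S.nabla X W) + S.g Z (S.nabla Y (S.nabla X W))) := by
    rw [S.compat X Z W, S.D_add_right, S.compat Y (S.nabla X Z) W,
      S.compat Y Z (S.nabla X W)]
  have e3 := S.compat (S.bracket X Y) Z W
  unfold RiemannianStructure.R
  rw [aux_g_sub_left, aux_g_sub_left, map_sub, map_sub]
  linear_combination e2 + e3 - e1 - hb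

variable (SS : SasakianOn S)

lemma aux_eta_phi (X : V) : SS.η (SS.φ X) = 0 := by
  have h1 := SS.φ_sq (SS.φ X)
  rw [SS.φ_sq X] at h1
  have h2 : SS.φ (-X + SS.η X • SS.ξ) = -(SS.φ X) := by
    rw [map_add, map_neg, map_smul, SS.φ_xi, smul_zero, add_zero]
  rw [h2] at h1
  have h3 : SS.η (SS.φ X) • SS.ξ = 0 := (left_eq_add.mp h1)
  have h4 := congrArg SS.η h3
  rwa [map_smul, smul_eq_mul, SS.η_xi, mul_one, map_zero] at h4

lemma aux_g_phi_xi (X : V) : S.g (SS.φ X) SS.ξ = 0 := by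
  rw [S.g_symm, ← SS.η_g]; exact aux_eta_phi S SS X

lemma aux_nabla_xi_xi : S.nabla SS.ξ SS.ξ = 0 := by
  rw [SS.nabla_xi, SS.φ_xi, neg_zero]

lemma aux_nabla_phi (X Y : V) :
    S.nabla X (SS.φ Y) = SS.φ (S.nabla X Y) + (S.g X Y • SS.ξ - SS.η Y • X) := by
  have h := SS.sasaki X Y
  rw [sub_eq_iff_eq_add] at h
  rw [h]; abel

lemma aux_R_xi (X Y : V) : S.R X Y SS.ξ = SS.η Y • X - SS.η X • Y := by
  unfold RiemannianStructure.R
  rw [SS.nabla_xi Y, SS.nabla_xi X, SS.nabla_xi (S.bracket X Y),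
    aux_nabla_neg_right, aux_nabla_neg_right, aux_nabla_phi S SS X Y,
    aux_nabla_phi S SS Y X, ← S.torsion_free, map_sub, S.g_symm Y X]
  abel

lemma aux_frame_ext {k : ℕ} (e : Fin k → V) (he : S.IsOrthonormalFrame e)
    (W W' : V) (h : ∀ Z, S.g W Z = S.g W' Z) : W = W' := by
  calc W = ∑ i, S.g W (e i) • e i := he.2 W
    _ = ∑ i, S.g W' (e i) • e i := Finset.sum_congr rfl fun i _ => by rw [h]
    _ = W' := (he.2 W').symm

lemma aux_ricci_xi {k : ℕ} (e : Fin k → V) (he : S.IsOrthonormalFrame e) (X : V) :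
    S.ricciOf e X SS.ξ = ((k : C) - 1) * SS.η X := by
  have hterm : ∀ i, S.g (S.R X (e i) (e i)) SS.ξ
      = SS.η X * S.g (e i) (e i) - SS.η (e i) * S.g X (e i) := by
    intro i
    have ha := aux_gR_antisymm S X (e i) (e i) SS.ξ
    rw [aux_R_xi S SS X (e i)] at ha
    have : S.g (e i) (SS.η (e i) • X - SS.η X • e i)
        = SS.η (e i) * S.g (e i) X - SS.η X * S.g (e i) (e i) := by
      rw [map_sub, aux_g_smul_right, aux_g_smul_right]
    rw [this, S.g_symm (e i) X] at ha
    linear_combination ha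
  have hsum : SS.η X = ∑ i, S.g X (e i) * SS.η (e i) := by
    conv_lhs => rw [he.2 X]
    rw [map_sum]
    simp_rw [map_smul, smul_eq_mul]
  unfold RiemannianStructure.ricciOf
  rw [Finset.sum_congr rfl fun i _ => hterm i]
  rw [Finset.sum_sub_distrib]
  have hdiag : ∀ i : Fin k, SS.η X * S.g (e i) (e i) = SS.η X := fun i => by
    rw [he.1, if_pos rfl, mul_one]
  rw [Finset.sum_congr rfl fun i _ => hdiag i]
  rw [Finset.sum_const, Finset.card_univ, Fintype.card_fin, nsmul_eq_mul]
  have : ∑ i, SS.η (e i) * S.g X (e i) = SS.η X := by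
    rw [hsum]; exact Finset.sum_congr rfl fun i _ => by ring
  rw [this]; ring

end Helpers


/-- (Main theorem.) In a Sasakian manifold of dimension `2n+1` satisfying the gradient
generalised Ricci soliton equation `Hess f₁ = -c₁ df₂ ⊙ df₂ + c₂ Ric + λ g`, the vector
field `ζ = grad f₁ + c₁ ξ(ξ(f₂)) grad f₂ - c₁ ξ(f₂) ∇_ξ grad f₂` equals `ξ(f₁) ξ`; in
particular `ζ` is parallel to `ξ`. -/
theorem sasakian_soliton_zeta_parallel_xi (S : RiemannianStructure C V) (SS : SasakianOn S)
    (n : ℕ) (e : Fin (2 * n + 1) → V) (he : S.IsOrthonormalFrame e)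
    (f₁ f₂ : C) (c₁ c₂ lam : ℝ)
    (hsol : ∀ X Y : V, S.hess f₁ X Y =
      -(algebraMap ℝ C c₁) * S.diffSq f₂ X Y + algebraMap ℝ C c₂ * S.ricciOf e X Y
        + algebraMap ℝ C lam * S.g X Y) :
    S.grad f₁ + (algebraMap ℝ C c₁ * S.D SS.ξ (S.D SS.ξ f₂)) • S.grad f₂
        - (algebraMap ℝ C c₁ * S.D SS.ξ f₂) • S.nabla SS.ξ (S.grad f₂)
      = S.D SS.ξ f₁ • SS.ξ := by
  have h2n : ((2 * n + 1 : ℕ) : C) - 1 = algebraMap ℝ C (2 * n) := by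
    rw [← map_natCast (algebraMap ℝ C) (2 * n + 1), ← map_one (algebraMap ℝ C),
      ← map_sub]
    congr 1
    push_cast; ring
  -- Step A: hess f₁ X ξ = -(c₁)*(X f₂ * ξ f₂) + Kc * η X
  have hKc : ∀ X : V, S.hess f₁ X SS.ξ
      = -(algebraMap ℝ C c₁ * (S.D X f₂ * S.D SS.ξ f₂))
        + algebraMap ℝ C (c₂ * (2 * n) + lam) * SS.η X := by
    intro X
    rw [hsol X SS.ξ, aux_ricci_xi S SS e he X, h2n]
    have hgx : S.g X SS.ξ = SS.η X := by rw [S.g_symm, ← SS.η_g]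
    rw [hgx]
    have hd : S.diffSq f₂ X SS.ξ = S.D X f₂ * S.D SS.ξ f₂ := rfl
    rw [hd]
    simp only [map_add, map_mul, map_ofNat, map_natCast]
    ring
  -- Step B: ∇_ξ grad f₁
  have heq2 : S.nabla SS.ξ (S.grad f₁)
      = (-(algebraMap ℝ C c₁ * S.D SS.ξ f₂)) • S.grad f₂
        + algebraMap ℝ C (c₂ * (2 * n) + lam) • SS.ξ := by
    apply aux_frame_ext S e he
    intro Z
    have hL : S.g (S.nabla SS.ξ (S.grad f₁)) Z = S.hess f₁ SS.ξ Z := rfl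
    rw [hL, aux_hess_symm, hKc Z]
    rw [aux_g_add_left, aux_g_smul_left, aux_g_smul_left, S.grad_def, ← SS.η_g]
    ring
  -- eta of bracket along ξ
  have hbr : ∀ X : V, SS.η (S.bracket SS.ξ X) = S.D SS.ξ (SS.η X) := by
    intro X
    rw [← S.torsion_free, map_sub, SS.nabla_xi X, map_neg, aux_eta_phi S SS, neg_zero,
      sub_zero]
    have hc := S.compat SS.ξ SS.ξ X
    rw [aux_nabla_xi_xi, aux_g_zero_left, zero_add] at hc
    rw [SS.η_g, ← hc, ← SS.η_g]
  -- main scalar identity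
  have key : ∀ X : V, S.D X f₁ - SS.η X * S.D SS.ξ f₁
      = -(algebraMap ℝ C c₁ * (S.D X f₂ * S.D SS.ξ (S.D SS.ξ f₂)))
        + algebraMap ℝ C c₁ * S.D SS.ξ f₂ * S.hess f₂ X SS.ξ := by
    intro X
    -- Way A: via curvature antisymmetry and R(ξ,X)ξ
    have hA : S.g (S.R SS.ξ X (S.grad f₁)) SS.ξ
        = S.D X f₁ - SS.η X * S.D SS.ξ f₁ := by
      have ha := aux_gR_antisymm S SS.ξ X (S.grad f₁) SS.ξ
      rw [aux_R_xi S SS SS.ξ X, SS.η_xi, one_smul] at ha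
      have hexp : S.g (S.grad f₁) (SS.η X • SS.ξ - X)
          = SS.η X * S.g (S.grad f₁) SS.ξ - S.g (S.grad f₁) X := by
        rw [map_sub, aux_g_smul_right]
      rw [hexp, S.grad_def, S.grad_def] at ha
      linear_combination ha
    -- Way B: term by term
    have hT1' : S.g (S.nabla SS.ξ (S.nabla X (S.grad f₁))) SS.ξ
        = -(algebraMap ℝ C c₁ * (S.D SS.ξ (S.D X f₂) * S.D SS.ξ f₂
              + S.D X f₂ * S.D SS.ξ (S.D SS.ξ f₂)))
          + algebraMap ℝ C (c₂ * (2 * n) + lam) * S.D SS.ξ (SS.η X) := by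
      have hc1 := S.compat SS.ξ (S.nabla X (S.grad f₁)) SS.ξ
      rw [aux_nabla_xi_xi, aux_g_zero_right, add_zero] at hc1
      rw [← hc1]
      have hh : S.g (S.nabla X (S.grad f₁)) SS.ξ = S.hess f₁ X SS.ξ := rfl
      rw [hh, hKc X]
      simp only [S.D_add_right, aux_D_neg_right, S.D_mul, S.D_const]
      ring
    have hT2' : S.g (S.nabla X (S.nabla SS.ξ (S.grad f₁))) SS.ξ
        = -(algebraMap ℝ C c₁ * S.D X (S.D SS.ξ f₂)) * S.D SS.ξ f₂
          + (-(algebraMap ℝ C c₁ * S.D SS.ξ f₂)) * S.hess f₂ X SS.ξ := by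
      rw [heq2, S.nabla_add_right, S.nabla_leibniz, S.nabla_leibniz, SS.nabla_xi X]
      have hh : S.g (S.nabla X (S.grad f₂)) SS.ξ = S.hess f₂ X SS.ξ := rfl
      simp only [aux_g_add_left, aux_g_smul_left, aux_D_neg_right, S.D_mul, S.D_const,
        aux_g_neg_left, aux_g_phi_xi, S.grad_def, hh]
      ring
    have hT3' : S.g (S.nabla (S.bracket SS.ξ X) (S.grad f₁)) SS.ξ
        = -(algebraMap ℝ C c₁ * ((S.D SS.ξ (S.D X f₂) - S.D X (S.D SS.ξ f₂))
              * S.D SS.ξ f₂))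
          + algebraMap ℝ C (c₂ * (2 * n) + lam) * S.D SS.ξ (SS.η X) := by
      have hh : S.g (S.nabla (S.bracket SS.ξ X) (S.grad f₁)) SS.ξ
          = S.hess f₁ (S.bracket SS.ξ X) SS.ξ := rfl
      rw [hh, hKc (S.bracket SS.ξ X), S.bracket_apply, hbr X]
    have hR : S.g (S.R SS.ξ X (S.grad f₁)) SS.ξ
        = S.g (S.nabla SS.ξ (S.nabla X (S.grad f₁))) SS.ξ
          - S.g (S.nabla X (S.nabla SS.ξ (S.grad f₁))) SS.ξ
          - S.g (S.nabla (S.bracket SS.ξ X) (S.grad f₁)) SS.ξ := by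
      simp only [RiemannianStructure.R, aux_g_sub_left]
    linear_combination -hA + hR + hT1' - hT2' - hT3'
  -- conclude by frame extensionality
  apply aux_frame_ext S e he
  intro Z
  rw [aux_g_sub_left, aux_g_add_left, aux_g_smul_left, aux_g_smul_left, aux_g_smul_left,
    S.grad_def, S.grad_def]
  have hh : S.g (S.nabla SS.ξ (S.grad f₂)) Z = S.hess f₂ SS.ξ Z := rfl
  rw [hh, aux_hess_symm, ← SS.η_g]
  linear_combination key Z
end
end

section
/- On ℝ² × (0, π) with the metric g given in coordinates (x,y,z) by the matrix [[p²+q², 0, -q],[0, p², 0],[-q, 0, 1]], where p = 4e^y/(16+e^{2y}) and q = -e^{2y}/(16+e^{2y}), the functions f₁ = ((2c₂+λ)/2)(ln(16+e^{2y}) - 2 ln(sin z / (2c₂+λ))) and f₂ = -(1/2)√(-(2c₂+λ)/c₁)(2 ln(sin z) - ln(16+e^{2y})) satisfy Hess f₁ = -c₁ df₂ ⊙ df₂ + c₂ Ric + λ g, provided c₁ < 0 and 2c₂ + λ > 0. -/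
/-!
Write `a = e^{2y}/(16 + e^{2y})`. Then `p² = a(1 - a)` and `p² + q² = -q = a`, and `a` solves the
logistic equation `a' = 2a(1 - a)`. For every such profile the Christoffel symbols of
`[[a, 0, a], [0, a(1 - a), 0], [a, 0, 1]]` are affine in `a`, and the metric is Einstein with
`Ric = 2g`. With `u = ½ log(16 + e^{2y}) - log sin z` one finds `Hess u = g + du ⊗ du`; since
`f₁ = (2c₂ + λ) u + const` and `f₂ = √(-(2c₂ + λ)/c₁) u`, both sides of the equation equal
`(2c₂ + λ)(g + du ⊗ du)`.
-/

noncomputable section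
open scoped BigOperators

open Filter Topology Real

section PartialDerivatives

variable {n : ℕ} {x : Fin n → ℝ}

theorem pd_congr_of_eventuallyEq {f h : (Fin n → ℝ) → ℝ} (hfh : f =ᶠ[𝓝 x] h) (i : Fin n) :
    pd i f x = pd i h x := by
  rw [pd, pd, hfh.fderiv_eq]

theorem hasFDerivAt_comp_apply {φ : ℝ → ℝ} {φ' : ℝ} {c : Fin n} (hφ : HasDerivAt φ φ' (x c)) :
    HasFDerivAt (fun v => φ (v c)) (φ' • ContinuousLinearMap.proj (R := ℝ) c) x :=
  hφ.comp_hasFDerivAt x (ContinuousLinearMap.proj (R := ℝ) (φ := fun _ : Fin n => ℝ) c).hasFDerivAt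

theorem pd_comp_apply {φ : ℝ → ℝ} {φ' : ℝ} {c : Fin n} (hφ : HasDerivAt φ φ' (x c)) (i : Fin n) :
    pd i (fun v => φ (v c)) x = if c = i then φ' else 0 := by
  rw [pd, (hasFDerivAt_comp_apply hφ).fderiv]
  simp [Pi.single_apply]

theorem pd_add_comp_apply {φ ψ : ℝ → ℝ} {φ' ψ' : ℝ} {c d : Fin n}
    (hφ : HasDerivAt φ φ' (x c)) (hψ : HasDerivAt ψ ψ' (x d)) (i : Fin n) :
    pd i (fun v => φ (v c) + ψ (v d)) x =
      (if c = i then φ' else 0) + (if d = i then ψ' else 0) := by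
  rw [pd, ((hasFDerivAt_comp_apply hφ).fun_add (hasFDerivAt_comp_apply hψ)).fderiv]
  simp [Pi.single_apply]

theorem pd_pd_add_comp_apply {φ ψ φ' ψ' : ℝ → ℝ} {φ'' ψ'' : ℝ} {c d : Fin n}
    (hφ : ∀ᶠ t in 𝓝 (x c), HasDerivAt φ (φ' t) t) (hψ : ∀ᶠ t in 𝓝 (x d), HasDerivAt ψ (ψ' t) t)
    (hφ' : HasDerivAt φ' φ'' (x c)) (hψ' : HasDerivAt ψ' ψ'' (x d)) (i j : Fin n) :
    pd i (pd j (fun v => φ (v c) + ψ (v d))) x =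
      (if c = i then (if c = j then φ'' else 0) else 0) +
        (if d = i then (if d = j then ψ'' else 0) else 0) := by
  have hpd : pd j (fun v => φ (v c) + ψ (v d)) =ᶠ[𝓝 x]
      fun v => (if c = j then φ' (v c) else 0) + (if d = j then ψ' (v d) else 0) := by
    filter_upwards [(continuous_apply c).continuousAt.eventually hφ,
      (continuous_apply d).continuousAt.eventually hψ] with v hφv hψv
    exact pd_add_comp_apply hφv hψv j
  rw [pd_congr_of_eventuallyEq hpd]
  refine pd_add_comp_apply (φ := fun t => if c = j then φ' t else 0)
    (ψ := fun t => if d = j then ψ' t else 0) ?_ ?_ i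
  · split_ifs
    · exact hφ'
    · exact hasDerivAt_const _ _
  · split_ifs
    · exact hψ'
    · exact hasDerivAt_const _ _

end PartialDerivatives

def logisticMetricMatrix (α : ℝ) : Matrix (Fin 3) (Fin 3) ℝ :=
  !![α, 0, α; 0, α * (1 - α), 0; α, 0, 1]

def logisticMetricMatrixDeriv (α : ℝ) : Matrix (Fin 3) (Fin 3) ℝ :=
  !![1, 0, 1; 0, 1 - 2 * α, 0; 1, 0, 0]

theorem hasDerivAt_logisticMetricMatrix (α : ℝ) (k l : Fin 3) :
    HasDerivAt (fun α => logisticMetricMatrix α k l) (logisticMetricMatrixDeriv α k l) α := by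
  have hquad : HasDerivAt (fun α : ℝ => α * (1 - α)) (1 - 2 * α) α :=
    ((hasDerivAt_id' α).mul ((hasDerivAt_id' α).const_sub 1)).congr_deriv (by ring)
  fin_cases k <;> fin_cases l <;>
    simp [logisticMetricMatrix, logisticMetricMatrixDeriv, hquad, hasDerivAt_id', hasDerivAt_const]

theorem logisticMetricMatrix_inv {α : ℝ} (h₀ : α ≠ 0) (h₁ : α ≠ 1) :
    (logisticMetricMatrix α)⁻¹ =
      !![1 / (α * (1 - α)), 0, -1 / (1 - α);
         0, 1 / (α * (1 - α)), 0;
         -1 / (1 - α), 0, 1 / (1 - α)] := by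
  have h₁' : 1 - α ≠ 0 := sub_ne_zero.mpr h₁.symm
  refine Matrix.inv_eq_right_inv ?_
  ext k l
  fin_cases k <;> fin_cases l <;>
    simp [logisticMetricMatrix, Matrix.mul_apply, Fin.sum_univ_three] <;> field_simp <;> ring

def logisticChristoffel (α : ℝ) (k i j : Fin 3) : ℝ :=
  ![!![0, 1 - α, 0; 1 - α, 0, 1; 0, 1, 0],
    !![-1, 0, -1; 0, 1 - 2 * α, 0; -1, 0, 0],
    !![0, 0, 0; 0, 0, -α; 0, -α, 0]] k i j

theorem hasDerivAt_logisticChristoffel (α : ℝ) (k i j : Fin 3) :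
    HasDerivAt (fun α => logisticChristoffel α k i j)
      (logisticChristoffel 1 k i j - logisticChristoffel 0 k i j) α := by
  have haffine : (fun β => logisticChristoffel β k i j) = fun β => logisticChristoffel 0 k i j +
      β * (logisticChristoffel 1 k i j - logisticChristoffel 0 k i j) := by
    funext β
    fin_cases k <;> fin_cases i <;> fin_cases j <;> simp [logisticChristoffel] <;> ring
  rw [haffine]
  simpa using ((hasDerivAt_id α).mul_const _).const_add (logisticChristoffel 0 k i j)

def logisticMetric (a : ℝ → ℝ) (v : Fin 3 → ℝ) : Matrix (Fin 3) (Fin 3) ℝ :=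
  logisticMetricMatrix (a (v 1))

structure IsLogistic (a : ℝ → ℝ) : Prop where
  hasDerivAt : ∀ t, HasDerivAt a (2 * a t * (1 - a t)) t
  ne_zero : ∀ t, a t ≠ 0
  ne_one : ∀ t, a t ≠ 1

section LogisticMetric

variable {a : ℝ → ℝ}

theorem pd_logisticMetric (ha : ∀ t, HasDerivAt a (2 * a t * (1 - a t)) t) (i k l : Fin 3)
    (v : Fin 3 → ℝ) :
    pd i (fun w => logisticMetric a w k l) v =
      if 1 = i then logisticMetricMatrixDeriv (a (v 1)) k l * (2 * a (v 1) * (1 - a (v 1)))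
      else 0 :=
  pd_comp_apply ((hasDerivAt_logisticMetricMatrix _ k l).comp (v 1) (ha (v 1))) i

theorem christoffel_logisticMetric (ha : IsLogistic a) (k i j : Fin 3) (v : Fin 3 → ℝ) :
    christoffel (logisticMetric a) k i j v = logisticChristoffel (a (v 1)) k i j := by
  have h₀ := ha.ne_zero (v 1)
  have h₁ : 1 - a (v 1) ≠ 0 := sub_ne_zero.mpr (ha.ne_one (v 1)).symm
  simp only [christoffel, Fin.sum_univ_three, pd_logisticMetric ha.hasDerivAt]
  rw [logisticMetric, logisticMetricMatrix_inv h₀ (ha.ne_one _)]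
  fin_cases k <;> fin_cases i <;> fin_cases j <;>
    simp [logisticChristoffel, logisticMetricMatrixDeriv] <;> field_simp <;> ring

theorem pd_christoffel_logisticMetric (ha : IsLogistic a) (m k i j : Fin 3) (v : Fin 3 → ℝ) :
    pd m (christoffel (logisticMetric a) k i j) v =
      if 1 = m then
        (logisticChristoffel 1 k i j - logisticChristoffel 0 k i j) * (2 * a (v 1) * (1 - a (v 1)))
      else 0 := by
  have hΓ : christoffel (logisticMetric a) k i j = fun w => logisticChristoffel (a (w 1)) k i j :=
    funext (christoffel_logisticMetric ha k i j)
  rw [hΓ]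
  exact pd_comp_apply ((hasDerivAt_logisticChristoffel _ k i j).comp (v 1) (ha.hasDerivAt (v 1))) m

theorem ricciT_logisticMetric (ha : IsLogistic a) (j k : Fin 3) (v : Fin 3 → ℝ) :
    ricciT (logisticMetric a) j k v = 2 * logisticMetric a v j k := by
  simp only [ricciT, riemCurv, Fin.sum_univ_three, pd_christoffel_logisticMetric ha,
    christoffel_logisticMetric ha]
  fin_cases j <;> fin_cases k <;>
    simp [logisticChristoffel, logisticMetric, logisticMetricMatrix] <;> ring

end LogisticMetric

theorem hessian_logisticMetric_add_comp_apply {a : ℝ → ℝ} (ha : IsLogistic a)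
    {φ ψ φ' ψ' : ℝ → ℝ} {φ'' ψ'' : ℝ} {x : Fin 3 → ℝ}
    (hφ : ∀ᶠ t in 𝓝 (x 1), HasDerivAt φ (φ' t) t) (hψ : ∀ᶠ t in 𝓝 (x 2), HasDerivAt ψ (ψ' t) t)
    (hφ' : HasDerivAt φ' φ'' (x 1)) (hψ' : HasDerivAt ψ' ψ'' (x 2)) (i j : Fin 3) :
    hessian (logisticMetric a) (fun v => φ (v 1) + ψ (v 2)) i j x =
      !![φ' (x 1), 0, φ' (x 1);
         0, φ'' - (1 - 2 * a (x 1)) * φ' (x 1), a (x 1) * ψ' (x 2);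
         φ' (x 1), a (x 1) * ψ' (x 2), ψ''] i j := by
  rw [hessian, pd_pd_add_comp_apply hφ hψ hφ' hψ', Fin.sum_univ_three]
  simp only [christoffel_logisticMetric ha,
    pd_add_comp_apply hφ.self_of_nhds hψ.self_of_nhds]
  fin_cases i <;> fin_cases j <;> simp [logisticChristoffel]

def sasakiProfile (t : ℝ) : ℝ := exp (2 * t) / (16 + exp (2 * t))

theorem isLogistic_sasakiProfile : IsLogistic sasakiProfile where
  hasDerivAt t := by
    have hD : (16 : ℝ) + exp (2 * t) ≠ 0 := by positivity
    have h := ((hasDerivAt_id' t).const_mul 2).exp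
    refine (h.div (h.const_add 16) hD).congr_deriv ?_
    simp only [sasakiProfile]
    field_simp
  ne_zero t := by unfold sasakiProfile; positivity
  ne_one t := by
    have hD : (16 : ℝ) + exp (2 * t) ≠ 0 := by positivity
    rw [sasakiProfile, Ne, div_eq_one_iff_eq hD]
    linarith

def sasakiPotential (t : ℝ) : ℝ := log (16 + exp (2 * t)) / 2

theorem hasDerivAt_sasakiPotential (t : ℝ) : HasDerivAt sasakiPotential (sasakiProfile t) t := by
  have hD : (16 : ℝ) + exp (2 * t) ≠ 0 := by positivity
  refine ((((hasDerivAt_id' t).const_mul 2).exp.const_add 16).log hD).div_const 2 |>.congr_deriv ?_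
  rw [sasakiProfile]
  ring

theorem logisticMetric_sasakiProfile {p q : ℝ → ℝ}
    (hp : ∀ y, p y = 4 * exp y / (16 + exp (2 * y)))
    (hq : ∀ y, q y = -exp (2 * y) / (16 + exp (2 * y))) (v : Fin 3 → ℝ) :
    logisticMetric sasakiProfile v =
      !![p (v 1) ^ 2 + q (v 1) ^ 2, 0, -q (v 1); 0, p (v 1) ^ 2, 0; -q (v 1), 0, 1] := by
  have hD : (16 : ℝ) + exp (2 * v 1) ≠ 0 := by positivity
  have hexp : exp (2 * v 1) = exp (v 1) ^ 2 := by rw [← exp_nat_mul]; norm_num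
  ext k l
  fin_cases k <;> fin_cases l <;>
    simp [logisticMetric, logisticMetricMatrix, sasakiProfile, hp, hq, neg_div] <;>
    field_simp <;> rw [hexp] <;> ring

theorem hasDerivAt_cos_div_sin {t : ℝ} (ht : sin t ≠ 0) :
    HasDerivAt (fun t => cos t / sin t) (-(1 + (cos t / sin t) ^ 2)) t := by
  refine ((hasDerivAt_cos t).div (hasDerivAt_sin t) ht).congr_deriv ?_
  field_simp
  ring

theorem hasDerivAt_log_sin_div {c t : ℝ} (hc : c ≠ 0) (ht : sin t ≠ 0) :
    HasDerivAt (fun t => log (sin t / c)) (cos t / sin t) t := by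
  refine (((hasDerivAt_sin t).div_const c).log (div_ne_zero ht hc)).congr_deriv ?_
  field_simp

/-- On `ℝ² × (0, π)` with the Sasakian metric given in coordinates `(x, y, z)` by the
matrix `[[p²+q², 0, -q], [0, p², 0], [-q, 0, 1]]`, where `p = 4e^y/(16+e^{2y})` and
`q = -e^{2y}/(16+e^{2y})`, the functions
`f₁ = ((2c₂+λ)/2)(log(16+e^{2y}) - 2 log(sin z/(2c₂+λ)))` and
`f₂ = -(1/2)√(-(2c₂+λ)/c₁)(2 log(sin z) - log(16+e^{2y}))` satisfy
`Hess f₁ = -c₁ df₂ ⊙ df₂ + c₂ Ric + λ g`, provided `c₁ < 0` and `2c₂ + λ > 0`. -/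
theorem sasakian_example_generalised_ricci_soliton (c₁ c₂ lam : ℝ)
    (hc₁ : c₁ < 0) (hc : 0 < 2 * c₂ + lam)
    (p q : ℝ → ℝ)
    (hp : ∀ y, p y = 4 * Real.exp y / (16 + Real.exp (2 * y)))
    (hq : ∀ y, q y = -Real.exp (2 * y) / (16 + Real.exp (2 * y)))
    (g : (Fin 3 → ℝ) → Matrix (Fin 3) (Fin 3) ℝ)
    (hg : ∀ x, g x = !![p (x 1) ^ 2 + q (x 1) ^ 2, 0, -q (x 1);
                        0, p (x 1) ^ 2, 0;
                        -q (x 1), 0, 1])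
    (f₁ f₂ : (Fin 3 → ℝ) → ℝ)
    (hf₁ : ∀ x, f₁ x = (2 * c₂ + lam) / 2 *
      (Real.log (16 + Real.exp (2 * x 1)) - 2 * Real.log (Real.sin (x 2) / (2 * c₂ + lam))))
    (hf₂ : ∀ x, f₂ x = -(1 / 2) * Real.sqrt (-(2 * c₂ + lam) / c₁) *
      (2 * Real.log (Real.sin (x 2)) - Real.log (16 + Real.exp (2 * x 1)))) :
    ∀ x : Fin 3 → ℝ, 0 < x 2 → x 2 < Real.pi → ∀ i j : Fin 3,
      hessian g f₁ i j x =
        -c₁ * (pd i f₂ x * pd j f₂ x) + c₂ * ricciT g i j x + lam * g x i j := by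
  intro x hz₀ hzπ i j
  set C := 2 * c₂ + lam with hC
  set s := √(-C / c₁) with hs
  have hlam : lam = -c₁ * s ^ 2 - 2 * c₂ := by
    rw [hs, sq_sqrt (div_nonneg_of_nonpos (by linarith) hc₁.le)]
    field_simp [hc₁.ne]
    linarith
  have hsin : sin (x 2) ≠ 0 := (sin_pos_of_pos_of_lt_pi hz₀ hzπ).ne'
  have hg' : g = logisticMetric sasakiProfile :=
    funext fun v => by rw [hg, logisticMetric_sasakiProfile hp hq]
  have hf₁' : f₁ = fun v => C * sasakiPotential (v 1) + -C * log (sin (v 2) / C) :=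
    funext fun v => by rw [hf₁, sasakiPotential]; ring
  have hf₂' : f₂ = fun v => s * sasakiPotential (v 1) + -s * log (sin (v 2)) :=
    funext fun v => by rw [hf₂, sasakiPotential]; ring
  have hlogsin₁ : ∀ᶠ t in 𝓝 (x 2),
      HasDerivAt (fun t => -C * log (sin t / C)) (-C * (cos t / sin t)) t := by
    filter_upwards [continuous_sin.continuousAt.eventually_ne hsin] with t ht
    exact (hasDerivAt_log_sin_div hc.ne' ht).const_mul _
  have hlogsin₂ : HasDerivAt (fun t => -s * log (sin t)) (-s * (cos (x 2) / sin (x 2))) (x 2) :=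
    ((hasDerivAt_sin _).log hsin).const_mul _
  have hpot (κ t : ℝ) := (hasDerivAt_sasakiPotential t).const_mul κ
  subst hg' hf₁' hf₂'
  rw [hessian_logisticMetric_add_comp_apply isLogistic_sasakiProfile
      (Eventually.of_forall (hpot C)) hlogsin₁
      ((isLogistic_sasakiProfile.hasDerivAt _).const_mul C)
      ((hasDerivAt_cos_div_sin hsin).const_mul (-C)),
    ricciT_logisticMetric isLogistic_sasakiProfile,
    pd_add_comp_apply (hpot s _) hlogsin₂, pd_add_comp_apply (hpot s _) hlogsin₂]
  fin_cases i <;> fin_cases j <;>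
    simp [logisticMetric, logisticMetricMatrix] <;> rw [hC, hlam] <;> ring
end
end
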